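/- arXiv:2412.17916 — 3 statements merged into one kernel-verified Lean document; each statement's English description precedes it below -/
import Mathlib

section
/- ℙ-almost surely, the empirical log-moment generating functions composed with Cᵀ epi-converge to that of μ: ℙ({ω ∈ Ω : the sequence of functions z ↦ L_{μ_n^(ω)}(Cᵀz) = log M_n(Cᵀz,ω) epi-converges to z ↦ L_μ(Cᵀz)}) = 1. -/
open MeasureTheory Filter Topology Metric ProbabilityTheory
open scoped RealInnerProductSpace Pointwise

noncomputable section

abbrev Euc (k : ℕ) : Type := EuclideanSpace ℝ (Fin k)

/-- Moment generating function of a measure on `Euc k`. -/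
def Mgf {k : ℕ} (μ : Measure (Euc k)) (y : Euc k) : ℝ :=
  ∫ x, Real.exp ⟪y, x⟫ ∂μ

/-- Log-moment generating function. -/
def Lmgf {k : ℕ} (μ : Measure (Euc k)) (y : Euc k) : ℝ :=
  Real.log (Mgf μ y)

/-- MEM function: Fenchel conjugate of the log-moment generating function. -/
def Kappa {k : ℕ} (μ : Measure (Euc k)) (x : Euc k) : EReal :=
  ⨆ y : Euc k, ((⟪y, x⟫ - Lmgf μ y : ℝ) : EReal)

/-- Fenchel conjugate of an extended-real-valued function. -/
def EConj {k : ℕ} (g : Euc k → EReal) (w : Euc k) : EReal :=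
  ⨆ z : Euc k, (((⟪z, w⟫ : ℝ) : EReal) - g z)

/-- Properness for extended-real-valued functions. -/
def EProper {k : ℕ} (g : Euc k → EReal) : Prop :=
  (∀ z, g z ≠ ⊥) ∧ (∃ z, g z ≠ ⊤)

/-- Convexity for extended-real-valued functions. -/
def EConvex {k : ℕ} (g : Euc k → EReal) : Prop :=
  ∀ x y : Euc k, ∀ a b : ℝ, 0 ≤ a → 0 ≤ b → a + b = 1 →
    g (a • x + b • y) ≤ (a : EReal) * g x + (b : EReal) * g y

/-- Epigraphical convergence of a sequence of extended-real-valued functions. -/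
def EpiConverges {F : Type*} [TopologicalSpace F] (f : ℕ → F → EReal) (g : F → EReal) : Prop :=
  (∀ z : F, ∀ zs : ℕ → F, Tendsto zs atTop (𝓝 z) →
      g z ≤ Filter.liminf (fun n => f n (zs n)) atTop) ∧
  (∀ z : F, ∃ zs : ℕ → F, Tendsto zs atTop (𝓝 z) ∧
      Filter.limsup (fun n => f n (zs n)) atTop ≤ g z)

variable {d m : ℕ}

/-- Primal MEM objective `x ↦ α g(Cx) + κ_μ(x)`. -/
def PrimalObj (α : ℝ) (g : Euc m → EReal) (C : Euc d →L[ℝ] Euc m)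
    (μ : Measure (Euc d)) (x : Euc d) : EReal :=
  (α : EReal) * g (C x) + Kappa μ x

/-- Dual MEM objective `z ↦ α g*(-z/α) + L_μ(Cᵀ z)` for general fidelity. -/
def DualObj (α : ℝ) (g : Euc m → EReal) (C : Euc d →L[ℝ] Euc m)
    (μ : Measure (Euc d)) (z : Euc m) : EReal :=
  (α : EReal) * EConj g (-(α⁻¹ • z)) +
    ((Lmgf μ (ContinuousLinearMap.adjoint C z) : ℝ) : EReal)

/-- Dual MEM objective with quadratic fidelity. -/
def QDual (α : ℝ) (b : Euc m) (C : Euc d →L[ℝ] Euc m)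
    (μ : Measure (Euc d)) (z : Euc m) : ℝ :=
  ‖z‖ ^ 2 / (2 * α) - ⟪b, z⟫ + Lmgf μ (ContinuousLinearMap.adjoint C z)

/-- Empirical moment generating function from samples. -/
def EmpMgf {Ω : Type*} (X : ℕ → Ω → Euc d) (n : ℕ) (ω : Ω) (y : Euc d) : ℝ :=
  (n : ℝ)⁻¹ * ∑ i ∈ Finset.range n, Real.exp ⟪y, X i ω⟫

/-- Empirical log-moment generating function. -/
def EmpLmgf {Ω : Type*} (X : ℕ → Ω → Euc d) (n : ℕ) (ω : Ω) (y : Euc d) : ℝ :=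
  Real.log (EmpMgf X n ω y)

/-- Empirical dual objective, general fidelity. -/
def DualObjEmp {Ω : Type*} (α : ℝ) (g : Euc m → EReal) (C : Euc d →L[ℝ] Euc m)
    (X : ℕ → Ω → Euc d) (n : ℕ) (ω : Ω) (z : Euc m) : EReal :=
  (α : EReal) * EConj g (-(α⁻¹ • z)) +
    ((EmpLmgf X n ω (ContinuousLinearMap.adjoint C z) : ℝ) : EReal)

/-- Empirical dual objective with quadratic fidelity. -/
def QDualEmp {Ω : Type*} (α : ℝ) (b : Euc m) (C : Euc d →L[ℝ] Euc m)
    (X : ℕ → Ω → Euc d) (n : ℕ) (ω : Ω) (z : Euc m) : ℝ :=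
  ‖z‖ ^ 2 / (2 * α) - ⟪b, z⟫ + EmpLmgf X n ω (ContinuousLinearMap.adjoint C z)

/-- `|𝒳| = max_{x ∈ 𝒳} ‖x‖`. -/
def XBound (Xs : Set (Euc d)) : ℝ := sSup ((fun x => ‖x‖) '' Xs)

/-- The constant `ρ̂`. -/
def rhoHat (α : ℝ) (b : Euc m) (C : Euc d →L[ℝ] Euc m) (Xs : Set (Euc d)) : ℝ :=
  2 * α * (‖b‖ + ‖C‖ * XBound Xs)

/-- The constant `ρ₀`. -/
def rho0 (α : ℝ) (b : Euc m) (C : Euc d →L[ℝ] Euc m) (Xs : Set (Euc d)) : ℝ :=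
  max (rhoHat α b C Xs)
    ((rhoHat α b C Xs) ^ 2 / (2 * α) + ‖b‖ * rhoHat α b C Xs +
      rhoHat α b C Xs * ‖C‖ * XBound Xs)

/-- `D_ρ(ν,μ) = max_{z ∈ B_ρ} |L_μ(Cᵀz) − L_ν(Cᵀz)|`. -/
def Drho (ρ : ℝ) (C : Euc d →L[ℝ] Euc m) (ν μ : Measure (Euc d)) : ℝ :=
  sSup ((fun z => |Lmgf μ (ContinuousLinearMap.adjoint C z) -
      Lmgf ν (ContinuousLinearMap.adjoint C z)|) '' Metric.closedBall (0 : Euc m) ρ)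

/-- Smallest singular value of `C`. -/
def sigmaMin (C : Euc d →L[ℝ] Euc m) : ℝ :=
  ⨅ x : Metric.sphere (0 : Euc d) 1, ‖C x.val‖

/-- The set of `ε`-minimizers of the quadratic-fidelity dual objective. -/
def SEps (α : ℝ) (b : Euc m) (C : Euc d →L[ℝ] Euc m) (ν : Measure (Euc d)) (ε : ℝ) :
    Set (Euc m) :=
  {z | ∀ w, QDual α b C ν z ≤ QDual α b C ν w + ε}

/-!
For each fixed `y` the strong law of large numbers gives `M_n(y) → M(y)` almost surely, hence
almost surely simultaneously on a countable dense set. All samples lie in a ball of radius `R`, so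
`y ↦ ⟪y, x⟫` varies by at most `R ‖y - y'‖` and every log-moment generating function in sight,
empirical or not, is `R`-Lipschitz. Equi-Lipschitz functions converging on a dense set to a
continuous limit converge continuously (`f_n(z_n) → f(z)` whenever `z_n → z`), and continuous
convergence gives both halves of epi-convergence.
-/

open scoped NNReal

section LipschitzLimits

variable {ι α β : Type*} [PseudoMetricSpace α] [PseudoMetricSpace β] {l : Filter ι}
  {F : ι → α → β} {f : α → β} {K : ℝ≥0}

theorem tendsto_apply_of_lipschitzWith (hF : ∀ i, LipschitzWith K (F i))
    (hlim : ∀ x, Tendsto (F · x) l (𝓝 (f x))) {xs : ι → α} {x : α}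
    (hxs : Tendsto xs l (𝓝 x)) : Tendsto (fun i => F i (xs i)) l (𝓝 (f x)) := by
  rw [tendsto_iff_dist_tendsto_zero]
  have hbound : ∀ i, dist (F i (xs i)) (f x) ≤ K * dist (xs i) x + dist (F i x) (f x) :=
    fun i => (dist_triangle _ (F i x) _).trans (by gcongr; exact (hF i).dist_le_mul _ _)
  have hlim_bound : Tendsto (fun i => K * dist (xs i) x + dist (F i x) (f x)) l (𝓝 0) := by
    simpa using ((tendsto_iff_dist_tendsto_zero.1 hxs).const_mul (K : ℝ)).add
      (tendsto_iff_dist_tendsto_zero.1 (hlim x))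
  exact squeeze_zero (fun _ => dist_nonneg) hbound hlim_bound

theorem tendsto_apply_of_lipschitzWith_of_dense (hF : ∀ i, LipschitzWith K (F i))
    (hf : Continuous f) {s : Set α} (hs : Dense s) (hlim : ∀ x ∈ s, Tendsto (F · x) l (𝓝 (f x)))
    {xs : ι → α} {x : α} (hxs : Tendsto xs l (𝓝 x)) :
    Tendsto (fun i => F i (xs i)) l (𝓝 (f x)) := by
  have hclosed : IsClosed {x | Tendsto (F · x) l (𝓝 (f x))} :=
    (LipschitzWith.uniformEquicontinuous F K hF).equicontinuous.isClosed_setOfPred_tendsto hf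
  have hall : ∀ x, Tendsto (F · x) l (𝓝 (f x)) := fun x =>
    hclosed.closure_subset_iff.2 hlim (hs.closure_eq ▸ Set.mem_univ x)
  exact tendsto_apply_of_lipschitzWith hF hall hxs

end LipschitzLimits

/-- `hle` forces `f` to vanish either identically or nowhere. -/
theorem lipschitzWith_log_of_le_exp_mul {E : Type*} [SeminormedAddCommGroup E] {f : E → ℝ}
    {R : ℝ≥0} (hf : ∀ y, 0 ≤ f y) (hle : ∀ y y', f y ≤ Real.exp (R * ‖y - y'‖) * f y') :
    LipschitzWith R (fun y => Real.log (f y)) := by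
  refine LipschitzWith.of_le_add_mul R fun y y' => ?_
  rw [dist_eq_norm]
  rcases (hf y).eq_or_lt with hy | hy
  · have hy' : f y' = 0 := le_antisymm (by simpa [← hy] using hle y' y) (hf y')
    simp only [← hy, hy', Real.log_zero, zero_add]
    positivity
  · have hy' : 0 < f y' := pos_of_mul_pos_right (hy.trans_le (hle y y')) (Real.exp_pos _).le
    calc Real.log (f y) ≤ Real.log (Real.exp (R * ‖y - y'‖) * f y') :=
          Real.log_le_log hy (hle y y')
      _ = Real.log (f y') + R * ‖y - y'‖ := by
          rw [Real.log_mul (Real.exp_pos _).ne' hy'.ne', Real.log_exp, add_comm]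

section ExpInner

variable {F : Type*} [NormedAddCommGroup F] [InnerProductSpace ℝ F]

theorem exp_inner_le_exp_mul_norm_sub_mul {R : ℝ} {x : F} (hx : ‖x‖ ≤ R) (y y' : F) :
    Real.exp ⟪y, x⟫ ≤ Real.exp (R * ‖y - y'‖) * Real.exp ⟪y', x⟫ := by
  rw [← Real.exp_add, Real.exp_le_exp]
  have hdiff : ⟪y, x⟫ - ⟪y', x⟫ ≤ R * ‖y - y'‖ :=
    calc ⟪y, x⟫ - ⟪y', x⟫ = ⟪y - y', x⟫ := (inner_sub_left _ _ _).symm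
      _ ≤ ‖y - y'‖ * ‖x‖ := real_inner_le_norm _ _
      _ ≤ R * ‖y - y'‖ := by rw [mul_comm]; gcongr
  linarith

theorem integrable_exp_inner_of_norm_le {Ω : Type*} [MeasurableSpace Ω] {P : Measure Ω}
    [IsFiniteMeasure P] {X : Ω → F} (hX : AEStronglyMeasurable X P) {R : ℝ}
    (hXR : ∀ᵐ ω ∂P, ‖X ω‖ ≤ R) (y : F) : Integrable (fun ω => Real.exp ⟪y, X ω⟫) P := by
  refine .of_bound ((by fun_prop : Continuous fun x => Real.exp ⟪y, x⟫).comp_aestronglyMeasurable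
    hX) (Real.exp (R * ‖y‖)) ?_
  filter_upwards [hXR] with ω hω
  simpa [Real.abs_exp] using exp_inner_le_exp_mul_norm_sub_mul hω y 0

end ExpInner

section Mgf

variable {k : ℕ} {ν : Measure (Euc k)} {R : ℝ≥0}

theorem mgf_pos [IsFiniteMeasure ν] [NeZero ν] (hν : ∀ᵐ x ∂ν, ‖x‖ ≤ R) (y : Euc k) :
    0 < Mgf ν y :=
  integral_exp_pos (integrable_exp_inner_of_norm_le aestronglyMeasurable_id hν y)

theorem lipschitzWith_lmgf [IsFiniteMeasure ν] (hν : ∀ᵐ x ∂ν, ‖x‖ ≤ R) :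
    LipschitzWith R (Lmgf ν) := by
  refine lipschitzWith_log_of_le_exp_mul (fun y => integral_nonneg fun _ => (Real.exp_pos _).le)
    fun y y' => ?_
  have hint := integrable_exp_inner_of_norm_le aestronglyMeasurable_id hν
  rw [Mgf, Mgf, ← integral_const_mul]
  refine integral_mono_ae (hint y) ((hint y').const_mul _) ?_
  filter_upwards [hν] with x hx
  exact exp_inner_le_exp_mul_norm_sub_mul hx y y'

theorem lipschitzWith_empLmgf {Ω : Type*} {X : ℕ → Ω → Euc k} (hX : ∀ i ω, ‖X i ω‖ ≤ R)
    (n : ℕ) (ω : Ω) : LipschitzWith R (EmpLmgf X n ω) := by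
  refine lipschitzWith_log_of_le_exp_mul (fun y => by unfold EmpMgf; positivity)
    fun y y' => ?_
  rw [EmpMgf, EmpMgf, mul_left_comm, Finset.mul_sum _ _ (Real.exp (R * ‖y - y'‖))]
  gcongr with i
  exact exp_inner_le_exp_mul_norm_sub_mul (hX i ω) y y'

theorem ae_tendsto_empMgf {Ω : Type*} [MeasurableSpace Ω] {P : Measure Ω} [IsFiniteMeasure P]
    {X : ℕ → Ω → Euc k} (hXmeas : ∀ i, Measurable (X i)) (hlaw : ∀ i, P.map (X i) = ν)
    (hindep : iIndepFun X P) (hX : ∀ i ω, ‖X i ω‖ ≤ R) (y : Euc k) :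
    ∀ᵐ ω ∂P, Tendsto (fun n => EmpMgf X n ω y) atTop (𝓝 (Mgf ν y)) := by
  have hmeas : Measurable fun x : Euc k => Real.exp ⟪y, x⟫ := by fun_prop
  have hint : Integrable (fun ω => Real.exp ⟪y, X 0 ω⟫) P :=
    integrable_exp_inner_of_norm_le (hXmeas 0).aestronglyMeasurable
      (ae_of_all _ (hX 0)) y
  have hident (i : ℕ) : IdentDistrib (fun ω => Real.exp ⟪y, X i ω⟫)
      (fun ω => Real.exp ⟪y, X 0 ω⟫) P P :=
    (IdentDistrib.mk (hXmeas i).aemeasurable (hXmeas 0).aemeasurable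
      (by rw [hlaw i, hlaw 0])).comp hmeas
  have hmean : ∫ ω, Real.exp ⟪y, X 0 ω⟫ ∂P = Mgf ν y := by
    rw [Mgf, ← hlaw 0, integral_map (hXmeas 0).aemeasurable hmeas.aestronglyMeasurable]
  have hslln := strong_law_ae_real _ hint
    (fun i j hij => (hindep.indepFun hij).comp hmeas hmeas) hident
  filter_upwards [hslln] with ω hω
  simpa only [EmpMgf, Function.comp_apply, hmean, div_eq_inv_mul] using hω

end Mgf

theorem epiConverges_of_tendsto {F : Type*} [TopologicalSpace F] {f : ℕ → F → EReal}
    {g : F → EReal} (h : ∀ z (zs : ℕ → F), Tendsto zs atTop (𝓝 z) →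
      Tendsto (fun n => f n (zs n)) atTop (𝓝 (g z))) :
    EpiConverges f g :=
  ⟨fun z zs hzs => (h z zs hzs).liminf_eq.ge,
    fun z => ⟨fun _ => z, tendsto_const_nhds, (h z _ tendsto_const_nhds).limsup_eq.le⟩⟩

theorem empirical_lmgf_epiconsistent_general
    (d m : ℕ)
    (Xs : Set (Euc d)) (hXc : IsCompact Xs)
    (μ : Measure (Euc d)) (hμP : IsProbabilityMeasure μ) (hμX : ∀ᵐ x ∂μ, x ∈ Xs)
    (C : Euc d →L[ℝ] Euc m)
    (Ω : Type) (mΩ : MeasurableSpace Ω) (P : Measure Ω) (hP : IsProbabilityMeasure P)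
    (X : ℕ → Ω → Euc d) (hXmeas : ∀ i, Measurable (X i))
    (hlaw : ∀ i, Measure.map (X i) P = μ)
    (hindep : iIndepFun X P)
    (hXval : ∀ i ω, X i ω ∈ Xs) :
    P {ω | EpiConverges
        (fun n z => ((EmpLmgf X n ω (ContinuousLinearMap.adjoint C z) : ℝ) : EReal))
        (fun z => ((Lmgf μ (ContinuousLinearMap.adjoint C z) : ℝ) : EReal))} = 1 := by
  obtain ⟨R, hR⟩ : ∃ R : ℝ≥0, ∀ x ∈ Xs, ‖x‖ ≤ R :=
    let ⟨R, hR⟩ := hXc.isBounded.exists_norm_le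
    ⟨R.toNNReal, fun x hx => (hR x hx).trans (Real.le_coe_toNNReal R)⟩
  have hμR : ∀ᵐ x ∂μ, ‖x‖ ≤ R := hμX.mono hR
  have hXR (i : ℕ) (ω : Ω) : ‖X i ω‖ ≤ R := hR _ (hXval i ω)
  set u := TopologicalSpace.denseSeq (Euc d)
  have hslln : ∀ᵐ ω ∂P, ∀ j, Tendsto (fun n => EmpMgf X n ω (u j)) atTop (𝓝 (Mgf μ (u j))) :=
    ae_all_iff.2 fun j => ae_tendsto_empMgf hXmeas hlaw hindep hXR (u j)
  have hepi : ∀ᵐ ω ∂P, EpiConverges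
      (fun n z => ((EmpLmgf X n ω (ContinuousLinearMap.adjoint C z) : ℝ) : EReal))
      (fun z => ((Lmgf μ (ContinuousLinearMap.adjoint C z) : ℝ) : EReal)) := by
    filter_upwards [hslln] with ω hω
    refine epiConverges_of_tendsto fun z zs hzs => EReal.tendsto_coe.2 ?_
    refine tendsto_apply_of_lipschitzWith_of_dense (lipschitzWith_empLmgf hXR · ω)
      (lipschitzWith_lmgf hμR).continuous (TopologicalSpace.denseRange_denseSeq _) ?_
      (((ContinuousLinearMap.adjoint C).continuous.tendsto z).comp hzs)
    rintro _ ⟨j, rfl⟩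
    exact (Real.continuousAt_log (mgf_pos hμR (u j)).ne').tendsto.comp (hω j)
  exact (measure_congr (eventuallyEq_univ.2 hepi)).trans measure_univ

/-- a.s. epi-convergence of empirical log-moment generating functions
(composed with `Cᵀ`). -/
theorem empirical_lmgf_epiconsistent
    (d m : ℕ) (hd : 0 < d) (hm : 0 < m)
    (Xs : Set (Euc d)) (hXc : IsCompact Xs) (hXne : Xs.Nonempty)
    (μ : Measure (Euc d)) (hμP : IsProbabilityMeasure μ) (hμX : ∀ᵐ x ∂μ, x ∈ Xs)
    (C : Euc d →L[ℝ] Euc m)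
    (Ω : Type) (mΩ : MeasurableSpace Ω) (P : Measure Ω) (hP : IsProbabilityMeasure P)
    (X : ℕ → Ω → Euc d) (hXmeas : ∀ i, Measurable (X i))
    (hlaw : ∀ i, Measure.map (X i) P = μ)
    (hindep : iIndepFun X P)
    (hXval : ∀ i ω, X i ω ∈ Xs) :
    P {ω | EpiConverges
        (fun n z => ((EmpLmgf X n ω (ContinuousLinearMap.adjoint C z) : ℝ) : EReal))
        (fun z => ((Lmgf μ (ContinuousLinearMap.adjoint C z) : ℝ) : EReal))} = 1 :=
  empirical_lmgf_epiconsistent_general d m Xs hXc μ hμP hμX C Ω mΩ P hP X hXmeas hlaw hindep hXval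
end
end

section
/- Let ẑ ∈ ℝ^m and let z_n → ẑ be any sequence converging to ẑ. Then for ℙ-almost every ω ∈ Ω, ∇L_{μ_n^(ω)}(Cᵀz_n) → ∇L_μ(Cᵀẑ) as n → ∞, where ∇L_ν denotes the gradient of the smooth function L_ν : ℝ^d → ℝ. -/
open MeasureTheory Filter Topology Metric ProbabilityTheory
open scoped RealInnerProductSpace Pointwise

noncomputable section

variable {d m : ℕ}

/-!
The gradient of a log-moment generating function is a ratio of two integrals,
`∇L_ν(y) = (∫ e^⟪y,x⟫ x dν) / (∫ e^⟪y,x⟫ dν)`, and the empirical log-moment generating function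
is that of the empirical measure `μ_n`. It therefore suffices that, almost surely,
`∫ F(y_n, ·) dμ_n → ∫ F(ŷ, ·) dμ` whenever `y_n → ŷ`, for `F(y, x) = e^⟪y,x⟫` and
`F(y, x) = e^⟪y,x⟫ x`. At the points of a countable dense set this is the strong law of large
numbers. All measures involved have mass at most one and are carried by the compact set `𝒳`, so
the maps `y ↦ ∫ F(y, ·) dν` form an equicontinuous family, and equicontinuity carries the
convergence from the dense set to moving points.
-/

open scoped ENNReal

section EmpiricalMeasure

variable {Ω α : Type*} [MeasurableSpace α]

def empiricalMeasure (X : ℕ → Ω → α) (n : ℕ) (ω : Ω) : Measure α :=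
  (n : ℝ≥0∞)⁻¹ • ∑ i ∈ Finset.range n, Measure.dirac (X i ω)

variable (X : ℕ → Ω → α) (ω : Ω)

theorem empiricalMeasure_zero : empiricalMeasure X 0 ω = 0 := by
  simp [empiricalMeasure]

theorem isProbabilityMeasure_empiricalMeasure {n : ℕ} (hn : n ≠ 0) :
    IsProbabilityMeasure (empiricalMeasure X n ω) := by
  constructor
  simp [empiricalMeasure,
    ENNReal.inv_mul_cancel (Nat.cast_ne_zero.2 hn) (ENNReal.natCast_ne_top n)]

theorem empiricalMeasure_univ_le_one (n : ℕ) : empiricalMeasure X n ω Set.univ ≤ 1 := by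
  rcases eq_or_ne n 0 with rfl | hn
  · simp [empiricalMeasure_zero]
  · have := isProbabilityMeasure_empiricalMeasure X ω hn
    exact prob_le_one

theorem ae_empiricalMeasure_mem [MeasurableSingletonClass α] {K : Set α} (hK : ∀ i, X i ω ∈ K)
    (n : ℕ) : ∀ᵐ x ∂empiricalMeasure X n ω, x ∈ K := by
  simp [ae_iff, empiricalMeasure, Measure.dirac_apply, hK]

theorem integral_empiricalMeasure [MeasurableSingletonClass α] {E : Type*} [NormedAddCommGroup E]
    [NormedSpace ℝ E] [CompleteSpace E] (g : α → E) (n : ℕ) :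
    ∫ x, g x ∂empiricalMeasure X n ω = (n : ℝ)⁻¹ • ∑ i ∈ Finset.range n, g (X i ω) := by
  rw [empiricalMeasure, integral_smul_measure, integral_finsetSum_measure]
  · simp [integral_dirac]
  · exact fun i _ => integrable_dirac (by simp)

end EmpiricalMeasure

section StrongLaw

variable {Ω α E : Type*} [MeasurableSpace Ω] {P : Measure Ω} [MeasurableSpace α]
  [MeasurableSingletonClass α] {μ : Measure α} {X : ℕ → Ω → α}
  [NormedAddCommGroup E] [NormedSpace ℝ E] [CompleteSpace E] [MeasurableSpace E] [BorelSpace E]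
  [SecondCountableTopology E]

theorem ae_tendsto_integral_empiricalMeasure (hX : ∀ i, Measurable (X i))
    (hlaw : ∀ i, P.map (X i) = μ) (hindep : iIndepFun X P) {g : α → E} (hg : Measurable g)
    (hgμ : Integrable g μ) :
    ∀ᵐ ω ∂P, Tendsto (fun n => ∫ x, g x ∂empiricalMeasure X n ω) atTop (𝓝 (∫ x, g x ∂μ)) := by
  have hident : ∀ i, IdentDistrib (g ∘ X i) (g ∘ X 0) P P := fun i =>
    (IdentDistrib.mk (hX i).aemeasurable (hX 0).aemeasurable (by rw [hlaw, hlaw])).comp hg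
  have hint : Integrable (g ∘ X 0) P := by
    rw [← hlaw 0] at hgμ
    exact (integrable_map_measure hgμ.1 (hX 0).aemeasurable).1 hgμ
  have hmean : ∫ x, g x ∂μ = ∫ ω, (g ∘ X 0) ω ∂P := by
    rw [← hlaw 0, integral_map (hX 0).aemeasurable hg.aestronglyMeasurable]
    rfl
  simp_rw [integral_empiricalMeasure, hmean]
  exact strong_law_ae (fun i => g ∘ X i) hint
    (fun i j hij => (hindep.comp (fun _ => g) (fun _ => hg)).indepFun hij) hident

end StrongLaw

theorem EquicontinuousAt.tendsto_apply_of_tendsto {ι X α : Type*} [TopologicalSpace X]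
    [PseudoMetricSpace α] {l : Filter ι} {F : ι → X → α} {x : X} {z : α} {y : ι → X}
    (hF : EquicontinuousAt F x) (hz : Tendsto (F · x) l (𝓝 z)) (hy : Tendsto y l (𝓝 x)) :
    Tendsto (fun i => F i (y i)) l (𝓝 z) := by
  refine Metric.tendsto_nhds.2 fun ε hε => ?_
  filter_upwards [hy.eventually (Metric.equicontinuousAt_iff_right.1 hF _ (half_pos hε)),
    Metric.tendsto_nhds.1 hz _ (half_pos hε)] with i hFi hzi
  calc dist (F i (y i)) z ≤ dist (F i x) (F i (y i)) + dist (F i x) z := dist_triangle_left _ _ _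
    _ < ε / 2 + ε / 2 := add_lt_add (hFi i) hzi
    _ = ε := add_halves ε

section ParametricIntegral

variable {ι Y α E : Type*} [TopologicalSpace Y] [TopologicalSpace α] [MeasurableSpace α]
  [OpensMeasurableSpace α] [T2Space α] [NormedAddCommGroup E] {K : Set α}

theorem Continuous.integrable_of_ae_mem_compact {ν : Measure α} [IsFiniteMeasure ν] {f : α → E}
    (hf : Continuous f) (hK : IsCompact K) (hνK : ∀ᵐ x ∂ν, x ∈ K) : Integrable f ν := by
  rw [← Measure.restrict_eq_self_of_ae_mem hνK]
  exact hf.continuousOn.integrableOn_compact hK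

variable [NormedSpace ℝ E]

theorem equicontinuous_integral_of_ae_mem_compact {F : Y → α → E} (hF : Continuous F.uncurry)
    (hK : IsCompact K) (ν : ι → Measure α) (hν : ∀ i, ν i Set.univ ≤ 1)
    (hνK : ∀ i, ∀ᵐ x ∂ν i, x ∈ K) : Equicontinuous fun i y => ∫ x, F y x ∂ν i := by
  intro q
  rw [Metric.equicontinuousAt_iff_right]
  intro ε hε
  obtain ⟨v, hv, hvF⟩ := hK.mem_uniformity_of_prod hF.continuousOn (Set.mem_univ q)
    (Metric.dist_mem_uniformity (half_pos hε))
  rw [nhdsWithin_univ] at hv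
  filter_upwards [hv] with p hp i
  have : IsFiniteMeasure (ν i) := ⟨(hν i).trans_lt ENNReal.one_lt_top⟩
  have hint : ∀ y, Integrable (F y) (ν i) := fun y =>
    (hF.comp (Continuous.prodMk_right y)).integrable_of_ae_mem_compact hK (hνK i)
  have hclose : ∀ᵐ x ∂ν i, ‖F q x - F p x‖ ≤ ε / 2 := by
    filter_upwards [hνK i] with x hx
    rw [← dist_eq_norm, dist_comm]
    exact (hvF p hp x hx).le
  rw [dist_eq_norm, ← integral_sub (hint q) (hint p)]
  calc ‖∫ x, F q x - F p x ∂ν i‖ ≤ ε / 2 * (ν i).real Set.univ :=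
        norm_integral_le_of_norm_le_const hclose
    _ ≤ ε / 2 := mul_le_of_le_one_right (half_pos hε).le
        (ENNReal.toReal_le_of_le_ofReal zero_le_one (by simpa using hν i))
    _ < ε := half_lt_self hε

theorem tendsto_integral_of_tendsto_on_dense {l : Filter ι} {F : Y → α → E}
    (hF : Continuous F.uncurry) (hK : IsCompact K) {ν : ι → Measure α} (hν : ∀ i, ν i Set.univ ≤ 1)
    (hνK : ∀ i, ∀ᵐ x ∂ν i, x ∈ K) {μ : Measure α} (hμ : μ Set.univ ≤ 1) (hμK : ∀ᵐ x ∂μ, x ∈ K)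
    {D : Set Y} (hD : Dense D)
    (hconv : ∀ q ∈ D, Tendsto (fun i => ∫ x, F q x ∂ν i) l (𝓝 (∫ x, F q x ∂μ)))
    {y : ι → Y} {ŷ : Y} (hy : Tendsto y l (𝓝 ŷ)) :
    Tendsto (fun i => ∫ x, F (y i) x ∂ν i) l (𝓝 (∫ x, F ŷ x ∂μ)) := by
  have hequi := equicontinuous_integral_of_ae_mem_compact hF hK ν hν hνK ŷ
  have hlim : Continuous fun y => ∫ x, F y x ∂μ :=
    (equicontinuous_integral_of_ae_mem_compact hF hK (fun _ : Unit => μ) (fun _ => hμ)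
      (fun _ => hμK)).continuous ()
  exact hequi.tendsto_apply_of_tendsto (hequi.tendsto_of_mem_closure
    (hlim.continuousAt.mono_left nhdsWithin_le_nhds) hconv (hD ŷ)) hy

end ParametricIntegral

section UniformStrongLaw

variable {Ω Y α E : Type*} [MeasurableSpace Ω] {P : Measure Ω} [TopologicalSpace Y]
  [TopologicalSpace.SeparableSpace Y] [TopologicalSpace α] [MeasurableSpace α] [BorelSpace α]
  [T2Space α] [MeasurableSingletonClass α] {μ : Measure α} [IsProbabilityMeasure μ]
  {X : ℕ → Ω → α} {K : Set α}
  [NormedAddCommGroup E] [NormedSpace ℝ E] [CompleteSpace E] [MeasurableSpace E] [BorelSpace E]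
  [SecondCountableTopology E]

theorem ae_tendsto_parametric_integral_empiricalMeasure {F : Y → α → E}
    (hF : Continuous F.uncurry) (hK : IsCompact K) (hX : ∀ i, Measurable (X i))
    (hlaw : ∀ i, P.map (X i) = μ) (hindep : iIndepFun X P) (hXK : ∀ i ω, X i ω ∈ K)
    (hμK : ∀ᵐ x ∂μ, x ∈ K) :
    ∀ᵐ ω ∂P, ∀ (y : ℕ → Y) (ŷ : Y), Tendsto y atTop (𝓝 ŷ) →
      Tendsto (fun n => ∫ x, F (y n) x ∂empiricalMeasure X n ω) atTop (𝓝 (∫ x, F ŷ x ∂μ)) := by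
  obtain ⟨D, hDc, hD⟩ := TopologicalSpace.exists_countable_dense Y
  have hF' : ∀ q, Continuous (F q) := fun q => hF.comp (Continuous.prodMk_right q)
  have hslln : ∀ᵐ ω ∂P, ∀ q ∈ D, Tendsto (fun n => ∫ x, F q x ∂empiricalMeasure X n ω) atTop
      (𝓝 (∫ x, F q x ∂μ)) :=
    (ae_ball_iff hDc).2 fun q _ => ae_tendsto_integral_empiricalMeasure hX hlaw hindep
      (hF' q).measurable ((hF' q).integrable_of_ae_mem_compact hK hμK)
  filter_upwards [hslln] with ω hω y ŷ hy
  exact tendsto_integral_of_tendsto_on_dense hF hK (empiricalMeasure_univ_le_one X ω)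
    (ae_empiricalMeasure_mem X ω (hXK · ω)) prob_le_one hμK hD hω hy

end UniformStrongLaw

section LogMomentGeneratingFunction

theorem hasFDerivAt_exp_inner {E : Type*} [NormedAddCommGroup E] [InnerProductSpace ℝ E]
    (x y : E) :
    HasFDerivAt (fun z => Real.exp ⟪z, x⟫) (innerSL ℝ (Real.exp ⟪y, x⟫ • x)) y := by
  have h : HasFDerivAt (fun z => ⟪z, x⟫) (innerSL ℝ x) y := by
    convert (innerSL ℝ x).hasFDerivAt using 1
    ext z
    exact real_inner_comm x z
  simpa using h.exp

variable {ν : Measure (Euc d)} [IsFiniteMeasure ν] {K : Set (Euc d)}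

theorem mgf_pos_s8 [NeZero ν] (hK : IsCompact K) (hνK : ∀ᵐ x ∂ν, x ∈ K) (y : Euc d) :
    0 < Mgf ν y :=
  integral_exp_pos ((by fun_prop : Continuous fun x : Euc d => Real.exp ⟪y, x⟫)
    |>.integrable_of_ae_mem_compact hK hνK)

theorem hasFDerivAt_mgf (hK : IsCompact K) (hνK : ∀ᵐ x ∂ν, x ∈ K) (y : Euc d) :
    HasFDerivAt (Mgf ν) (innerSL ℝ (∫ x, Real.exp ⟪y, x⟫ • x ∂ν)) y := by
  obtain ⟨B, hB⟩ := ((isCompact_closedBall y 1).prod hK).exists_bound_of_continuousOn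
    (f := fun p : Euc d × Euc d => innerSL ℝ (Real.exp ⟪p.1, p.2⟫ • p.2)) (by fun_prop)
  have hderiv := hasFDerivAt_integral_of_dominated_of_fderiv_le (μ := ν)
    (F := fun y x => Real.exp ⟪y, x⟫) (F' := fun y x => innerSL ℝ (Real.exp ⟪y, x⟫ • x))
    (bound := fun _ => B) (closedBall_mem_nhds y one_pos)
    (Eventually.of_forall fun z => (by fun_prop : Continuous _).aestronglyMeasurable)
    ((by fun_prop : Continuous _).integrable_of_ae_mem_compact hK hνK)
    (by fun_prop : Continuous _).aestronglyMeasurable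
    (by filter_upwards [hνK] with x hx z hz using hB (z, x) ⟨hz, hx⟩) (integrable_const B)
    (Eventually.of_forall fun x z _ => hasFDerivAt_exp_inner x z)
  rwa [(innerSL ℝ).integral_comp_commSL (by simp)
    ((by fun_prop : Continuous _).integrable_of_ae_mem_compact hK hνK)] at hderiv

theorem hasGradientAt_lmgf [NeZero ν] (hK : IsCompact K) (hνK : ∀ᵐ x ∂ν, x ∈ K) (y : Euc d) :
    HasGradientAt (Lmgf ν) ((Mgf ν y)⁻¹ • ∫ x, Real.exp ⟪y, x⟫ • x ∂ν) y := by
  rw [hasGradientAt_iff_hasFDerivAt, map_smulₛₗ]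
  exact (hasFDerivAt_mgf hK hνK y).log (mgf_pos_s8 hK hνK y).ne'

theorem empLmgf_eq_lmgf_empiricalMeasure {Ω : Type*} (X : ℕ → Ω → Euc d) (n : ℕ) (ω : Ω) :
    EmpLmgf X n ω = Lmgf (empiricalMeasure X n ω) := by
  funext y
  simp [EmpLmgf, Lmgf, EmpMgf, Mgf, integral_empiricalMeasure]

end LogMomentGeneratingFunction

theorem empirical_lmgf_gradient_converges_general
    (d m : ℕ)
    (Xs : Set (Euc d)) (hXc : IsCompact Xs)
    (μ : Measure (Euc d)) (hμP : IsProbabilityMeasure μ) (hμX : ∀ᵐ x ∂μ, x ∈ Xs)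
    (C : Euc d →L[ℝ] Euc m)
    (Ω : Type) (mΩ : MeasurableSpace Ω) (P : Measure Ω)
    (X : ℕ → Ω → Euc d) (hXmeas : ∀ i, Measurable (X i))
    (hlaw : ∀ i, Measure.map (X i) P = μ)
    (hindep : iIndepFun X P)
    (hXval : ∀ i ω, X i ω ∈ Xs)
    (zhat : Euc m) (zn : ℕ → Euc m) (hzn : Tendsto zn atTop (𝓝 zhat)) :
    ∀ᵐ ω ∂P,
      Tendsto (fun n =>
          gradient (EmpLmgf X n ω) (ContinuousLinearMap.adjoint C (zn n))) atTop
        (𝓝 (gradient (Lmgf μ) (ContinuousLinearMap.adjoint C zhat))) := by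
  have hy : Tendsto (fun n => ContinuousLinearMap.adjoint C (zn n)) atTop
      (𝓝 (ContinuousLinearMap.adjoint C zhat)) :=
    ((ContinuousLinearMap.adjoint C).continuous.tendsto _).comp hzn
  have hmgf := ae_tendsto_parametric_integral_empiricalMeasure
    (F := fun y x : Euc d => Real.exp ⟪y, x⟫) (by fun_prop) hXc hXmeas hlaw hindep hXval hμX
  have hmoment := ae_tendsto_parametric_integral_empiricalMeasure
    (F := fun y x : Euc d => Real.exp ⟪y, x⟫ • x) (by fun_prop) hXc hXmeas hlaw hindep hXval hμX
  filter_upwards [hmgf, hmoment] with ω hω_mgf hω_moment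
  rw [(hasGradientAt_lmgf hXc hμX _).gradient]
  refine (((hω_mgf _ _ hy).inv₀ (mgf_pos_s8 hXc hμX _).ne').smul (hω_moment _ _ hy)).congr' ?_
  filter_upwards [eventually_ne_atTop 0] with n hn
  have := isProbabilityMeasure_empiricalMeasure X ω hn
  rw [empLmgf_eq_lmgf_empiricalMeasure,
    (hasGradientAt_lmgf hXc (ae_empiricalMeasure_mem X ω (hXval · ω) n) _).gradient]
  rfl

/-- a.s. convergence of gradients of the empirical LMGFs along a convergent
sequence of dual points. -/
theorem empirical_lmgf_gradient_converges
    (d m : ℕ) (hd : 0 < d) (hm : 0 < m)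
    (Xs : Set (Euc d)) (hXc : IsCompact Xs) (hXne : Xs.Nonempty)
    (μ : Measure (Euc d)) (hμP : IsProbabilityMeasure μ) (hμX : ∀ᵐ x ∂μ, x ∈ Xs)
    (C : Euc d →L[ℝ] Euc m)
    (Ω : Type) (mΩ : MeasurableSpace Ω) (P : Measure Ω) (hP : IsProbabilityMeasure P)
    (X : ℕ → Ω → Euc d) (hXmeas : ∀ i, Measurable (X i))
    (hlaw : ∀ i, Measure.map (X i) P = μ)
    (hindep : iIndepFun X P)
    (hXval : ∀ i ω, X i ω ∈ Xs)
    (zhat : Euc m) (zn : ℕ → Euc m) (hzn : Tendsto zn atTop (𝓝 zhat)) :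
    ∀ᵐ ω ∂P,
      Tendsto (fun n =>
          gradient (EmpLmgf X n ω) (ContinuousLinearMap.adjoint C (zn n))) atTop
        (𝓝 (gradient (Lmgf μ) (ContinuousLinearMap.adjoint C zhat))) :=
  empirical_lmgf_gradient_converges_general d m Xs hXc μ hμP hμX C Ω mΩ P X hXmeas hlaw hindep hXval
    zhat zn hzn
end
end

section
/- For all μ, ν ∈ 𝒫(𝒳), all ρ > ρ₀, all ε ∈ [0, ρ − ρ₀], and every δ > ε + 2 D_ρ(ν,μ): (a) |φ_ν(z̄_ν) − φ_μ(z̄_μ)| ≤ D_ρ(ν,μ), and (b) exc(S_ε(ν) ∩ B_ρ, S_δ(μ)) ≤ D_ρ(ν,μ), where z̄_ν, z̄_μ are the unique minimizers of φ_ν, φ_μ respectively. -/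
/-! On `B_ρ` the two dual objectives differ only through the log-moment generating terms, so
`|φ_ν - φ_μ| ≤ D_ρ(ν,μ)` there. Since `φ(z̄) ≤ φ(0) = 0` and `|L(Cᵀz)| ≤ ‖C‖ ‖z‖ |𝒳|`, every
minimizer lies in `B_ρ̂ ⊆ B_ρ`. The standard perturbation argument for two functions that are
uniformly close on a set containing both minimizers then gives (a), and shows that
`S_ε(ν) ∩ B_ρ ⊆ S_{ε + 2D}(μ) ⊆ S_δ(μ)`, so the excess in (b) is in fact `0`. -/

open MeasureTheory Filter Topology Metric ProbabilityTheory
open scoped RealInnerProductSpace Pointwise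

noncomputable section

variable {d m : ℕ}

section Perturbation

variable {E : Type*} {f g : E → ℝ} {s : Set E} {D : ℝ}

lemma abs_sub_le_of_isMin_of_forall_abs_sub_le (hfg : ∀ z ∈ s, |f z - g z| ≤ D)
    {x y : E} (hx : ∀ z, f x ≤ f z) (hy : ∀ z, g y ≤ g z) (hxs : x ∈ s) (hys : y ∈ s) :
    |f x - g y| ≤ D := by
  have hxD := abs_le.1 (hfg x hxs)
  have hyD := abs_le.1 (hfg y hys)
  exact abs_le.2 ⟨by linarith [hy x], by linarith [hx y]⟩

lemma le_add_of_almost_min_of_forall_abs_sub_le (hfg : ∀ z ∈ s, |f z - g z| ≤ D)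
    {ε : ℝ} {x y : E} (hx : ∀ w, f x ≤ f w + ε) (hy : ∀ z, g y ≤ g z) (hxs : x ∈ s)
    (hys : y ∈ s) (w : E) : g x ≤ g w + (ε + 2 * D) := by
  have hxD := abs_le.1 (hfg x hxs)
  have hyD := abs_le.1 (hfg y hys)
  linarith [hx y, hy w]

end Perturbation

lemma abs_log_integral_exp_le {Ω : Type*} [MeasurableSpace Ω] {μ : Measure Ω}
    [IsProbabilityMeasure μ] {f : Ω → ℝ} {c : ℝ} (hf : AEStronglyMeasurable f μ)
    (hfc : ∀ᵐ x ∂μ, |f x| ≤ c) : |Real.log (∫ x, Real.exp (f x) ∂μ)| ≤ c := by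
  have hexp : ∀ᵐ x ∂μ, Real.exp (-c) ≤ Real.exp (f x) ∧ Real.exp (f x) ≤ Real.exp c := by
    filter_upwards [hfc] with x hx
    obtain ⟨hlo, hhi⟩ := abs_le.1 hx
    exact ⟨Real.exp_le_exp.2 hlo, Real.exp_le_exp.2 hhi⟩
  have hint : Integrable (fun x => Real.exp (f x)) μ := by
    refine (integrable_const (Real.exp c)).mono'
      (Real.continuous_exp.comp_aestronglyMeasurable hf) ?_
    filter_upwards [hexp] with x hx
    rw [Real.norm_eq_abs, abs_of_pos (Real.exp_pos _)]
    exact hx.2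
  have hlo : Real.exp (-c) ≤ ∫ x, Real.exp (f x) ∂μ := by
    simpa using integral_mono_ae (integrable_const _) hint (hexp.mono fun x hx => hx.1)
  have hhi : ∫ x, Real.exp (f x) ∂μ ≤ Real.exp c := by
    simpa using integral_mono_ae hint (integrable_const _) (hexp.mono fun x hx => hx.2)
  refine abs_le.2 ⟨?_, ?_⟩
  · simpa using Real.log_le_log (Real.exp_pos _) hlo
  · simpa using Real.log_le_log ((Real.exp_pos _).trans_le hlo) hhi

section Lmgf

variable {k : ℕ} {Xs : Set (Euc k)}

lemma norm_le_XBound (hX : Bornology.IsBounded Xs) {x : Euc k} (hx : x ∈ Xs) :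
    ‖x‖ ≤ XBound Xs := by
  obtain ⟨R, hR⟩ := hX.exists_norm_le
  exact le_csSup ⟨R, Set.forall_mem_image.2 hR⟩ ⟨x, hx, rfl⟩

lemma XBound_nonneg (Xs : Set (Euc k)) : 0 ≤ XBound Xs :=
  Real.sSup_nonneg <| by rintro _ ⟨x, -, rfl⟩; exact norm_nonneg x

lemma abs_Lmgf_le (hX : Bornology.IsBounded Xs) (μ : Measure (Euc k)) [IsProbabilityMeasure μ]
    (hμ : ∀ᵐ x ∂μ, x ∈ Xs) (y : Euc k) : |Lmgf μ y| ≤ ‖y‖ * XBound Xs := by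
  refine abs_log_integral_exp_le (continuous_const.inner continuous_id).aestronglyMeasurable ?_
  filter_upwards [hμ] with x hx
  exact (abs_real_inner_le_norm y x).trans
    (mul_le_mul_of_nonneg_left (norm_le_XBound hX hx) (norm_nonneg y))

end Lmgf

section QDual

variable {Xs : Set (Euc d)} (C : Euc d →L[ℝ] Euc m)

lemma norm_adjoint_apply_le (z : Euc m) :
    ‖ContinuousLinearMap.adjoint C z‖ ≤ ‖C‖ * ‖z‖ := by
  simpa using (ContinuousLinearMap.adjoint C).le_opNorm z

lemma abs_Lmgf_adjoint_le (hX : Bornology.IsBounded Xs) (μ : Measure (Euc d))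
    [IsProbabilityMeasure μ] (hμ : ∀ᵐ x ∂μ, x ∈ Xs) (z : Euc m) :
    |Lmgf μ (ContinuousLinearMap.adjoint C z)| ≤ ‖C‖ * ‖z‖ * XBound Xs :=
  (abs_Lmgf_le hX μ hμ _).trans
    (mul_le_mul_of_nonneg_right (norm_adjoint_apply_le C z) (XBound_nonneg Xs))

lemma abs_Lmgf_sub_le_Drho (hX : Bornology.IsBounded Xs) {μ ν : Measure (Euc d)}
    [IsProbabilityMeasure μ] [IsProbabilityMeasure ν] (hμ : ∀ᵐ x ∂μ, x ∈ Xs)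
    (hν : ∀ᵐ x ∂ν, x ∈ Xs) {ρ : ℝ} {z : Euc m} (hz : z ∈ closedBall (0 : Euc m) ρ) :
    |Lmgf μ (ContinuousLinearMap.adjoint C z) - Lmgf ν (ContinuousLinearMap.adjoint C z)| ≤
      Drho ρ C ν μ := by
  refine le_csSup ⟨2 * (‖C‖ * ρ * XBound Xs), ?_⟩ ⟨z, hz, rfl⟩
  rintro _ ⟨w, hw, rfl⟩
  have hbound : ∀ (κ : Measure (Euc d)) [IsProbabilityMeasure κ], (∀ᵐ x ∂κ, x ∈ Xs) →
      |Lmgf κ (ContinuousLinearMap.adjoint C w)| ≤ ‖C‖ * ρ * XBound Xs := fun κ _ hκ =>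
    (abs_Lmgf_adjoint_le C hX κ hκ w).trans <| by
      gcongr
      · exact XBound_nonneg Xs
      · exact mem_closedBall_zero_iff.1 hw
  linarith [abs_sub (Lmgf μ (ContinuousLinearMap.adjoint C w))
    (Lmgf ν (ContinuousLinearMap.adjoint C w)), hbound μ hμ, hbound ν hν]

lemma abs_QDual_sub_le_Drho (hX : Bornology.IsBounded Xs) (α : ℝ) (b : Euc m)
    {μ ν : Measure (Euc d)} [IsProbabilityMeasure μ] [IsProbabilityMeasure ν]
    (hμ : ∀ᵐ x ∂μ, x ∈ Xs) (hν : ∀ᵐ x ∂ν, x ∈ Xs) {ρ : ℝ} {z : Euc m}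
    (hz : z ∈ closedBall (0 : Euc m) ρ) :
    |QDual α b C ν z - QDual α b C μ z| ≤ Drho ρ C ν μ := by
  rw [abs_sub_comm]
  simpa [QDual] using abs_Lmgf_sub_le_Drho C hX hμ hν hz

lemma norm_le_rhoHat_of_isMin (hX : Bornology.IsBounded Xs) {α : ℝ} (hα : 0 < α) (b : Euc m)
    (ν : Measure (Euc d)) [IsProbabilityMeasure ν] (hν : ∀ᵐ x ∂ν, x ∈ Xs)
    {z₀ : Euc m} (hmin : ∀ z, QDual α b C ν z₀ ≤ QDual α b C ν z) :
    ‖z₀‖ ≤ rhoHat α b C Xs := by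
  have hle_zero : QDual α b C ν z₀ ≤ 0 := by
    simpa [QDual, Lmgf, Mgf] using hmin 0
  have hinner : ⟪b, z₀⟫ ≤ ‖b‖ * ‖z₀‖ := real_inner_le_norm b z₀
  have hLmgf := (abs_le.1 (abs_Lmgf_adjoint_le C hX ν hν z₀)).1
  have hsq : ‖z₀‖ ^ 2 ≤ rhoHat α b C Xs * ‖z₀‖ := by
    unfold QDual at hle_zero
    have : ‖z₀‖ ^ 2 / (2 * α) ≤ (‖b‖ + ‖C‖ * XBound Xs) * ‖z₀‖ := by linarith
    rw [div_le_iff₀ (by positivity)] at this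
    unfold rhoHat
    linarith
  have hrhoHat : 0 ≤ rhoHat α b C Xs := by
    have := XBound_nonneg Xs
    unfold rhoHat
    positivity
  nlinarith [norm_nonneg z₀]

end QDual

theorem quadratic_dual_value_and_eps_solution_bounds_general
    (d m : ℕ)
    (Xs : Set (Euc d)) (hXc : IsCompact Xs)
    (C : Euc d →L[ℝ] Euc m) (α : ℝ) (hα : 0 < α) (b : Euc m) :
    ∀ μ ν : Measure (Euc d),
      IsProbabilityMeasure μ → (∀ᵐ x ∂μ, x ∈ Xs) →
      IsProbabilityMeasure ν → (∀ᵐ x ∂ν, x ∈ Xs) →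
    ∀ ρ : ℝ, rho0 α b C Xs < ρ →
    ∀ ε : ℝ, 0 ≤ ε → ε ≤ ρ - rho0 α b C Xs →
    ∀ δ : ℝ, ε + 2 * Drho ρ C ν μ < δ →
    ∀ zν zμ : Euc m,
      (∀ z, QDual α b C ν zν ≤ QDual α b C ν z) →
      (∀ z, QDual α b C μ zμ ≤ QDual α b C μ z) →
      (|QDual α b C ν zν - QDual α b C μ zμ| ≤ Drho ρ C ν μ ∧
        ∀ z ∈ SEps α b C ν ε ∩ Metric.closedBall (0 : Euc m) ρ,
          Metric.infDist z (SEps α b C μ δ) ≤ Drho ρ C ν μ) := by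
  intro μ ν _ hμ _ hν ρ hρ ε _ _ δ hδ zν zμ hminν hminμ
  have hX := hXc.isBounded
  have hclose : ∀ z ∈ closedBall (0 : Euc m) ρ,
      |QDual α b C ν z - QDual α b C μ z| ≤ Drho ρ C ν μ :=
    fun z hz => abs_QDual_sub_le_Drho C hX α b hμ hν hz
  have hrhoHat : rhoHat α b C Xs ≤ ρ := (le_max_left _ _).trans hρ.le
  have hzν : zν ∈ closedBall (0 : Euc m) ρ :=
    mem_closedBall_zero_iff.2 ((norm_le_rhoHat_of_isMin C hX hα b ν hν hminν).trans hrhoHat)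
  have hzμ : zμ ∈ closedBall (0 : Euc m) ρ :=
    mem_closedBall_zero_iff.2 ((norm_le_rhoHat_of_isMin C hX hα b μ hμ hminμ).trans hrhoHat)
  refine ⟨abs_sub_le_of_isMin_of_forall_abs_sub_le hclose hminν hminμ hzν hzμ, ?_⟩
  rintro z ⟨hzε, hzρ⟩
  have hzδ : z ∈ SEps α b C μ δ := fun w =>
    (le_add_of_almost_min_of_forall_abs_sub_le hclose hzε hminμ hzρ hzμ w).trans (by linarith)
  rw [infDist_zero_of_mem hzδ]
  exact (abs_nonneg _).trans (hclose zν hzν)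

/-- closeness of optimal values, and of approximate solution sets, of the
dual problems for two priors, in terms of `D_ρ(ν,μ)`. -/
theorem quadratic_dual_value_and_eps_solution_bounds
    (d m : ℕ) (hd : 0 < d) (hm : 0 < m)
    (Xs : Set (Euc d)) (hXc : IsCompact Xs) (hXne : Xs.Nonempty)
    (C : Euc d →L[ℝ] Euc m) (α : ℝ) (hα : 0 < α) (b : Euc m) :
    ∀ μ ν : Measure (Euc d),
      IsProbabilityMeasure μ → (∀ᵐ x ∂μ, x ∈ Xs) →
      IsProbabilityMeasure ν → (∀ᵐ x ∂ν, x ∈ Xs) →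
    ∀ ρ : ℝ, rho0 α b C Xs < ρ →
    ∀ ε : ℝ, 0 ≤ ε → ε ≤ ρ - rho0 α b C Xs →
    ∀ δ : ℝ, ε + 2 * Drho ρ C ν μ < δ →
    ∀ zν zμ : Euc m,
      (∀ z, QDual α b C ν zν ≤ QDual α b C ν z) →
      (∀ z, QDual α b C μ zμ ≤ QDual α b C μ z) →
      (|QDual α b C ν zν - QDual α b C μ zμ| ≤ Drho ρ C ν μ ∧
        ∀ z ∈ SEps α b C ν ε ∩ Metric.closedBall (0 : Euc m) ρ,
          Metric.infDist z (SEps α b C μ δ) ≤ Drho ρ C ν μ) :=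
  quadratic_dual_value_and_eps_solution_bounds_general d m Xs hXc C α hα b
end
end
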